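/- arXiv:1607.05243 — 4 statements merged into one kernel-verified Lean document; each statement's English description precedes it below -/
import Mathlib

section
/- Let p be a prime number and let G be the additive group (ℤ/pℤ) × (ℤ/pℤ). Let s₁, …, s_{p+1} be p+1 pairwise distinct nonzero elements of G. Then for every nonzero element g of G there exist non-negative integers d₁, …, d_{p+1} with d₁ + ⋯ + d_{p+1} ≤ p − 1 such that d₁·s₁ + ⋯ + d_{p+1}·s_{p+1} = g (where the integer scalars act on G by repeated addition). -/
open Pointwise Finset

variable {p : ℕ}

/-- cross product functional: `crossL v y = v.1 * y.2 - v.2 * y.1`, linear in `y`. -/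
def crossL (v : ZMod p × ZMod p) : (ZMod p × ZMod p) →ₗ[ZMod p] ZMod p :=
  v.1 • (LinearMap.snd _ _ _) - v.2 • (LinearMap.fst _ _ _)

lemma crossL_apply (v y : ZMod p × ZMod p) : crossL v y = v.1 * y.2 - v.2 * y.1 := rfl

/-- ratio: for `y` parallel to `v`, the scalar with `y = ratio v y • v`. -/
noncomputable def ratioZ (v y : ZMod p × ZMod p) : ZMod p :=
  if v.1 ≠ 0 then y.1 * v.1⁻¹ else y.2 * v.2⁻¹

lemma ratioZ_spec (hp : p.Prime) (v y : ZMod p × ZMod p) (hv : v ≠ 0)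
    (h : crossL v y = 0) : y = ratioZ v y • v := by
  haveI : Fact p.Prime := ⟨hp⟩
  rw [crossL_apply, sub_eq_zero] at h
  rcases eq_or_ne v.1 0 with h1 | h1
  · have h2 : v.2 ≠ 0 := by
      intro h2; exact hv (Prod.ext h1 h2)
    have : y.1 = 0 := by
      have := h.symm
      rw [h1, zero_mul] at this
      rcases mul_eq_zero.1 this with h' | h'
      · exact absurd h' h2
      · exact h'
    rw [ratioZ, if_neg (by simpa using h1)]
    refine Prod.ext ?_ ?_
    · simp [this, h1]
    · simp [mul_assoc, inv_mul_cancel₀ h2]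
  · rw [ratioZ, if_pos h1]
    refine Prod.ext ?_ ?_
    · simp [mul_assoc, inv_mul_cancel₀ h1]
    · show y.2 = y.1 * v.1⁻¹ * v.2
      field_simp
      linear_combination h

/-- iterated sumset -/
def itS (C : Finset (ZMod p)) : ℕ → Finset (ZMod p)
  | 0 => {0}
  | n + 1 => itS C n + C

lemma itS_nonempty (C : Finset (ZMod p)) (hC : C.Nonempty) (n : ℕ) : (itS C n).Nonempty := by
  induction n with
  | zero => exact ⟨0, by simp [itS]⟩
  | succ n ih => exact ih.add hC

lemma itS_card (hp : p.Prime) (C : Finset (ZMod p)) (hC : C.Nonempty) (n : ℕ) :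
    min p (n * (#C - 1) + 1) ≤ #(itS C n) := by
  induction n with
  | zero => simpa [itS] using min_le_right p 1
  | succ n ih =>
    have hcd := ZMod.cauchy_davenport hp (itS_nonempty C hC n) hC
    have h1 : 1 ≤ #C := hC.card_pos
    have hmul : (n+1) * (#C - 1) = n * (#C - 1) + (#C - 1) := by ring
    have : min p ((n+1) * (#C - 1) + 1) ≤ min p (#(itS C n) + #C - 1) := by omega
    calc min p ((n+1) * (#C - 1) + 1) ≤ min p (#(itS C n) + #C - 1) := this
      _ ≤ #(itS C n + C) := hcd
      _ = #(itS C (n+1)) := rfl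

lemma itS_univ [NeZero p] (hp : p.Prime) (C : Finset (ZMod p)) (hC : C.Nonempty) (n : ℕ)
    (h : p ≤ n * (#C - 1) + 1) : itS C n = Finset.univ := by
  haveI : Fact p.Prime := ⟨hp⟩
  apply Finset.eq_univ_of_card
  have h1 := itS_card hp C hC n
  have h2 : #(itS C n) ≤ Fintype.card (ZMod p) := Finset.card_le_univ _
  rw [ZMod.card] at h2 ⊢
  omega

lemma mem_itS_univ [NeZero p] (hp : p.Prime) (C : Finset (ZMod p)) (hC : C.Nonempty) (n : ℕ)
    (h : p ≤ n * (#C - 1) + 1) (γ : ZMod p) : γ ∈ itS C n := by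
  haveI : Fact p.Prime := ⟨hp⟩
  rw [itS_univ hp C hC n h]; exact Finset.mem_univ _

/-- realization, exact weight -/
lemma real_exact {ι : Type*} [Fintype ι] [DecidableEq ι] (S : Finset ι) (w : ι → ZMod p)
    (n : ℕ) (γ : ZMod p) (hγ : γ ∈ itS (S.image w) n) :
    ∃ d : ι → ℕ, (∀ i, i ∉ S → d i = 0) ∧ (∑ i, d i) = n ∧ (∑ i, (d i : ZMod p) * w i) = γ := by
  induction n generalizing γ with
  | zero =>
    simp only [itS, Finset.mem_singleton] at hγ
    subst hγ
    exact ⟨fun _ => 0, fun _ _ => rfl, by simp, by simp⟩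
  | succ n ih =>
    rw [show itS (S.image w) (n+1) = itS (S.image w) n + S.image w from rfl,
      Finset.mem_add] at hγ
    obtain ⟨a, ha, b, hb, hab⟩ := hγ
    obtain ⟨d, hsupp, hsum, hval⟩ := ih a ha
    obtain ⟨i₁, hi₁, hwi₁⟩ := Finset.mem_image.1 hb
    refine ⟨fun j => d j + if j = i₁ then 1 else 0, ?_, ?_, ?_⟩
    · intro i hi
      have h0 := hsupp i hi
      have : i ≠ i₁ := fun h => absurd (h ▸ hi₁) hi
      simp [h0, this]
    · rw [Finset.sum_add_distrib, hsum, Finset.sum_ite_eq' Finset.univ i₁ (fun _ => 1)]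
      simp
    · have : ∀ j, ((d j + if j = i₁ then 1 else 0 : ℕ) : ZMod p) * w j
          = (d j : ZMod p) * w j + if j = i₁ then w j else 0 := by
        intro j; split <;> simp <;> ring
      rw [Finset.sum_congr rfl (fun j _ => this j), Finset.sum_add_distrib, hval,
        Finset.sum_ite_eq' Finset.univ i₁ w, if_pos (Finset.mem_univ i₁), hwi₁, hab]

/-- realization, weight at most n, allowing the artificial value 0 -/
lemma real_le {ι : Type*} [Fintype ι] [DecidableEq ι] (S : Finset ι) (w : ι → ZMod p)
    (n : ℕ) (γ : ZMod p) (hγ : γ ∈ itS (insert 0 (S.image w)) n) :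
    ∃ d : ι → ℕ, (∀ i, i ∉ S → d i = 0) ∧ (∑ i, d i) ≤ n ∧ (∑ i, (d i : ZMod p) * w i) = γ := by
  induction n generalizing γ with
  | zero =>
    simp only [itS, Finset.mem_singleton] at hγ
    subst hγ
    exact ⟨fun _ => 0, fun _ _ => rfl, by simp, by simp⟩
  | succ n ih =>
    rw [show itS (insert 0 (S.image w)) (n+1) = itS (insert 0 (S.image w)) n
      + insert 0 (S.image w) from rfl, Finset.mem_add] at hγ
    obtain ⟨a, ha, b, hb, hab⟩ := hγ
    obtain ⟨d, hsupp, hsum, hval⟩ := ih a ha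
    rcases Finset.mem_insert.1 hb with hb0 | hbi
    · exact ⟨d, hsupp, le_trans hsum (Nat.le_succ n), by rw [hval, ← hab, hb0, add_zero]⟩
    · obtain ⟨i₁, hi₁, hwi₁⟩ := Finset.mem_image.1 hbi
      refine ⟨fun j => d j + if j = i₁ then 1 else 0, ?_, ?_, ?_⟩
      · intro i hi
        have h0 := hsupp i hi
        have : i ≠ i₁ := fun h => absurd (h ▸ hi₁) hi
        simp [h0, this]
      · rw [Finset.sum_add_distrib, Finset.sum_ite_eq' Finset.univ i₁ (fun _ => 1)]
        simp
        omega
      · have : ∀ j, ((d j + if j = i₁ then 1 else 0 : ℕ) : ZMod p) * w j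
            = (d j : ZMod p) * w j + if j = i₁ then w j else 0 := by
          intro j; split <;> simp <;> ring
        rw [Finset.sum_congr rfl (fun j _ => this j), Finset.sum_add_distrib, hval,
          Finset.sum_ite_eq' Finset.univ i₁ w, if_pos (Finset.mem_univ i₁), hwi₁, hab]



/-- Let `p` be a prime and `G = (ℤ/pℤ) × (ℤ/pℤ)`. Given `p+1` pairwise distinct nonzero
elements `s 0, …, s p` of `G`, every nonzero `g ∈ G` can be written as
`d 0 • s 0 + ⋯ + d p • s p` with non-negative integers `d i` summing to at most `p - 1`. -/
theorem stmt0 (p : ℕ) (hp : p.Prime)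
    (s : Fin (p + 1) → ZMod p × ZMod p)
    (hinj : Function.Injective s)
    (hnz : ∀ i, s i ≠ 0)
    (g : ZMod p × ZMod p) (hg : g ≠ 0) :
    ∃ d : Fin (p + 1) → ℕ,
      (∑ i, d i) ≤ p - 1 ∧ (∑ i, d i • s i) = g := by
  haveI : Fact p.Prime := ⟨hp⟩
  haveI : NeZero p := ⟨hp.pos.ne'⟩
  have hcast : ∀ (n : ℕ) (x : ZMod p × ZMod p), n • x = ((n : ZMod p)) • x :=
    fun n x => (Nat.cast_smul_eq_nsmul _ n x).symm
  by_cases hA : ∃ i lam, g = (lam : ZMod p) • s i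
  · obtain ⟨i, lam, hlam⟩ := hA
    refine ⟨fun j => if j = i then lam.val else 0, ?_, ?_⟩
    · rw [Finset.sum_ite_eq' Finset.univ i (fun _ => lam.val), if_pos (Finset.mem_univ i)]
      have := lam.val_lt
      omega
    · have : ∀ j, (if j = i then lam.val else 0) • s j
          = if j = i then lam.val • s i else 0 := by
        intro j; split
        · rename_i h; rw [h]
        · simp
      rw [Finset.sum_congr rfl (fun j _ => this j),
        Finset.sum_ite_eq' Finset.univ i (fun _ => lam.val • s i), if_pos (Finset.mem_univ i),
        hcast, ZMod.natCast_val, ZMod.cast_id, hlam]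
  · push_neg at hA
    -- no s i is parallel to g
    have hcr : ∀ i, crossL g (s i) ≠ 0 := by
      intro i h
      have h2 : crossL (s i) g = 0 := by
        rw [crossL_apply] at h ⊢
        linear_combination -h
      exact hA i (ratioZ (s i) g) (ratioZ_spec hp (s i) g (hnz i) h2)
    -- a point x₀ with crossL g x₀ = 1
    obtain ⟨x₀, hx₀⟩ : ∃ x₀, crossL g x₀ = 1 := by
      rcases eq_or_ne g.1 0 with h1 | h1
      · have h2 : g.2 ≠ 0 := fun h2 => hg (Prod.ext h1 h2)
        exact ⟨(-g.2⁻¹, 0), by rw [crossL_apply]; simp [mul_inv_cancel₀ h2]⟩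
      · exact ⟨(0, g.1⁻¹), by rw [crossL_apply]; simp [mul_inv_cancel₀ h1]⟩
    -- pigeonhole: two of the s i are parallel
    have hkey : ∀ i, crossL g ((crossL g (s i))⁻¹ • s i - x₀) = 0 := by
      intro i
      rw [map_sub, map_smul, hx₀, smul_eq_mul, inv_mul_cancel₀ (hcr i), sub_self]
    set μ : Fin (p+1) → ZMod p := fun i => ratioZ g ((crossL g (s i))⁻¹ • s i - x₀) with hμ
    have hn : ∀ i, (crossL g (s i))⁻¹ • s i = x₀ + μ i • g := by
      intro i
      have := ratioZ_spec hp g _ hg (hkey i)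
      rw [hμ]
      rw [sub_eq_iff_eq_add] at this
      rw [this, add_comm]
    obtain ⟨i₀, j₀, hne, hμeq⟩ : ∃ i j, i ≠ j ∧ μ i = μ j := by
      have hcard : Fintype.card (ZMod p) < Fintype.card (Fin (p+1)) := by
        rw [ZMod.card, Fintype.card_fin]; omega
      obtain ⟨a, b, hab, h⟩ := Fintype.exists_ne_map_eq_of_card_lt μ hcard
      exact ⟨a, b, hab, h⟩
    set v := s i₀ with hv_def
    have hv : v ≠ 0 := hnz i₀
    have hpar : crossL v (s j₀) = 0 := by
      have h1 : (crossL g (s i₀))⁻¹ • s i₀ = (crossL g (s j₀))⁻¹ • s j₀ := by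
        rw [hn i₀, hn j₀, hμeq]
      have h2 : s j₀ = (crossL g (s j₀) * (crossL g (s i₀))⁻¹) • s i₀ := by
        rw [mul_smul, h1, smul_smul, mul_inv_cancel₀ (hcr j₀), one_smul]
      rw [h2, map_smul, smul_eq_mul]
      have : crossL v (s i₀) = 0 := by rw [crossL_apply, hv_def]; ring
      rw [hv_def, this, mul_zero]
    -- the line through v, and the rest
    set P : Finset (Fin (p+1)) := Finset.univ.filter (fun i => crossL v (s i) = 0) with hP_def
    set Q : Finset (Fin (p+1)) := Finset.univ.filter (fun i => ¬ crossL v (s i) = 0) with hQ_def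
    have hi₀P : i₀ ∈ P := by
      rw [hP_def, Finset.mem_filter]
      exact ⟨Finset.mem_univ _, by rw [crossL_apply, hv_def]; ring⟩
    have hj₀P : j₀ ∈ P := by
      rw [hP_def, Finset.mem_filter]
      exact ⟨Finset.mem_univ _, hpar⟩
    have hm2 : 2 ≤ P.card := by
      have : 1 < P.card := Finset.one_lt_card.2 ⟨i₀, hi₀P, j₀, hj₀P, hne⟩
      omega
    set coeff : Fin (p+1) → ZMod p := fun i => ratioZ v (s i) with hcoeff_def
    have hPmem : ∀ i ∈ P, crossL v (s i) = 0 := by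
      intro i hi; rw [hP_def, Finset.mem_filter] at hi; exact hi.2
    have hQmem : ∀ i ∈ Q, crossL v (s i) ≠ 0 := by
      intro i hi; rw [hQ_def, Finset.mem_filter] at hi; exact hi.2
    have hcoeff : ∀ i ∈ P, s i = coeff i • v := by
      intro i hi
      exact ratioZ_spec hp v (s i) hv (hPmem i hi)
    have hcinj : Set.InjOn coeff P := by
      intro i hi j hj h
      apply hinj
      rw [hcoeff i hi, hcoeff j hj, h]
    have himg_card : (P.image coeff).card = P.card := Finset.card_image_of_injOn hcinj
    have h0img : (0 : ZMod p) ∉ P.image coeff := by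
      intro h
      obtain ⟨i, hi, hc⟩ := Finset.mem_image.1 h
      exact hnz i (by rw [hcoeff i hi, hc, zero_smul])
    have hmp : P.card ≤ p - 1 := by
      have hsub : P.image coeff ⊆ Finset.univ.erase 0 := by
        intro x hx
        exact Finset.mem_erase.2 ⟨fun h => h0img (h ▸ hx), Finset.mem_univ _⟩
      have h1 := Finset.card_le_card hsub
      rw [himg_card, Finset.card_erase_of_mem (Finset.mem_univ _), Finset.card_univ,
        ZMod.card] at h1
      exact h1
    have hp3 : 3 ≤ p := by omega
    have hgbar : crossL v g ≠ 0 := by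
      have h1 : crossL v g = -crossL g v := by rw [crossL_apply, crossL_apply]; ring
      rw [h1, hv_def]
      exact neg_ne_zero.2 (hcr i₀)
    have hPQ : P.card + Q.card = p + 1 := by
      rw [hP_def, hQ_def, Finset.card_filter_add_card_filter_not, Finset.card_univ,
        Fintype.card_fin]
    have hQ2 : 2 ≤ Q.card := by omega
    -- realization along the line P with budget B
    have lineReal : ∀ (B : ℕ) (ν : ZMod p), p ≤ B * P.card + 1 →
        ∃ d : Fin (p+1) → ℕ, (∀ i, i ∉ P → d i = 0) ∧ (∑ i, d i) ≤ B ∧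
          (∑ i, d i • s i) = ν • v := by
      intro B ν hB
      have hC : (insert (0:ZMod p) (P.image coeff)).Nonempty := ⟨0, Finset.mem_insert_self _ _⟩
      have hcard : (insert (0:ZMod p) (P.image coeff)).card = P.card + 1 := by
        rw [Finset.card_insert_of_notMem h0img, himg_card]
      have hmem : ν ∈ itS (insert 0 (P.image coeff)) B :=
        mem_itS_univ hp _ hC B (by rw [hcard]; simpa using hB) ν
      obtain ⟨d, hsupp, hsum, hval⟩ := real_le P coeff B ν hmem
      refine ⟨d, hsupp, hsum, ?_⟩
      calc ∑ i, d i • s i = ∑ i ∈ P, d i • s i :=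
            (Finset.sum_subset (Finset.subset_univ P)
              (fun i _ hi => by rw [hsupp i hi, zero_smul])).symm
        _ = ∑ i ∈ P, ((d i : ZMod p) * coeff i) • v := by
            refine Finset.sum_congr rfl fun i hi => ?_
            rw [hcoeff i hi, hcast, smul_smul]
        _ = (∑ i ∈ P, (d i : ZMod p) * coeff i) • v := by rw [Finset.sum_smul]
        _ = ν • v := by
            rw [Finset.sum_subset (Finset.subset_univ P)
              (fun i _ hi => by rw [hsupp i hi, Nat.cast_zero, zero_mul]), hval]
    set w : Fin (p+1) → ZMod p := fun t => crossL v (s t) with hw_def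
    have hQne : Q.Nonempty := Finset.card_pos.1 (by omega)
    have h0imgQ : (0 : ZMod p) ∉ Q.image w := by
      intro h
      obtain ⟨t, ht, hc⟩ := Finset.mem_image.1 h
      exact hQmem t ht hc
    by_cases hk : 2 ≤ (Q.image w).card
    · -- two different directions off the line
      have hodd : p % 2 = 1 := hp.eq_two_or_odd.resolve_left (by omega)
      set h : ℕ := (p-1)/2 with hh_def
      have hh2 : 2 * h = p - 1 := by omega
      -- reach the projection of g with budget h
      have hcov : p ≤ h * ((insert (0:ZMod p) (Q.image w)).card - 1) + 1 := by
        rw [Finset.card_insert_of_notMem h0imgQ, Nat.add_sub_cancel]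
        have : h * 2 ≤ h * (Q.image w).card := Nat.mul_le_mul le_rfl hk
        omega
      have hmem : crossL v g ∈ itS (insert 0 (Q.image w)) h :=
        mem_itS_univ hp _ ⟨0, Finset.mem_insert_self _ _⟩ h hcov _
      obtain ⟨d₁, hsupp₁, hsum₁, hval₁⟩ := real_le Q w h (crossL v g) hmem
      set α : ZMod p × ZMod p := g - ∑ i, d₁ i • s i with hα_def
      have hα0 : crossL v α = 0 := by
        rw [hα_def, map_sub, map_sum]
        have : ∀ i, crossL v (d₁ i • s i) = (d₁ i : ZMod p) * w i := by
          intro i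
          rw [map_nsmul, nsmul_eq_mul, hw_def]
        rw [Finset.sum_congr rfl (fun i _ => this i), hval₁, sub_self]
      have hαv : α = ratioZ v α • v := ratioZ_spec hp v α hv hα0
      obtain ⟨d₂, hsupp₂, hsum₂, hval₂⟩ := lineReal h (ratioZ v α) (by
        have : h * 2 ≤ h * P.card := Nat.mul_le_mul le_rfl hm2
        omega)
      refine ⟨fun i => d₁ i + d₂ i, ?_, ?_⟩
      · rw [Finset.sum_add_distrib]
        omega
      · have : ∀ i, (d₁ i + d₂ i) • s i = d₁ i • s i + d₂ i • s i := fun i => add_nsmul _ _ _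
        rw [Finset.sum_congr rfl (fun i _ => this i), Finset.sum_add_distrib, hval₂, ← hαv,
          hα_def]
        abel
    · -- all off-line elements have the same projection ybar
      have hk1 : (Q.image w).card = 1 := by
        have : 1 ≤ (Q.image w).card := Finset.card_pos.2 (Finset.image_nonempty.2 hQne)
        omega
      obtain ⟨ybar, himg⟩ := Finset.card_eq_one.1 hk1
      obtain ⟨t₁, ht₁⟩ := id hQne
      have hyt : ∀ t ∈ Q, crossL v (s t) = ybar := by
        intro t ht
        have : w t ∈ Q.image w := Finset.mem_image_of_mem w ht
        rw [himg, Finset.mem_singleton] at this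
        exact this
      have hybar0 : ybar ≠ 0 := fun h => hQmem t₁ ht₁ (by rw [hyt t₁ ht₁, h])
      set W : ℕ := (crossL v g * ybar⁻¹).val with hW_def
      have hW1 : 1 ≤ W := by
        have : crossL v g * ybar⁻¹ ≠ 0 := mul_ne_zero hgbar (inv_ne_zero hybar0)
        have := (ZMod.val_eq_zero _).not.2 this
        omega
      have hWp : W < p := ZMod.val_lt _
      have hWcast : (W : ZMod p) = crossL v g * ybar⁻¹ := by
        rw [hW_def, ZMod.natCast_val, ZMod.cast_id]
      set α : ZMod p × ZMod p := g - W • s t₁ with hα_def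
      have hα0 : crossL v α = 0 := by
        rw [hα_def, map_sub, map_nsmul, nsmul_eq_mul, hyt t₁ ht₁, hWcast, mul_assoc,
          inv_mul_cancel₀ hybar0, mul_one, sub_self]
      have hαv : α = ratioZ v α • v := ratioZ_spec hp v α hv hα0
      set c : ℕ := (p-2)/P.card + 1 with hc_def
      have hmc : p ≤ c * P.card + 1 := by
        have hdm := Nat.div_add_mod (p - 2) P.card
        have hr : (p - 2) % P.card < P.card := Nat.mod_lt _ (by omega)
        have hc2 : c * P.card = P.card * ((p-2)/P.card) + P.card := by rw [hc_def]; ring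
        omega
      by_cases hWc : W + c ≤ p - 1
      · -- put weight W on t₁ and fix up along the line
        obtain ⟨d₂, hsupp₂, hsum₂, hval₂⟩ := lineReal c (ratioZ v α) hmc
        refine ⟨fun i => (if i = t₁ then W else 0) + d₂ i, ?_, ?_⟩
        · rw [Finset.sum_add_distrib, Finset.sum_ite_eq' Finset.univ t₁ (fun _ => W),
            if_pos (Finset.mem_univ t₁)]
          omega
        · have h1 : ∀ i, ((if i = t₁ then W else 0) + d₂ i) • s i
              = (if i = t₁ then W • s t₁ else 0) + d₂ i • s i := by
            intro i
            rw [add_nsmul]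
            congr 1
            split
            · rename_i h; rw [h]
            · simp
          rw [Finset.sum_congr rfl (fun i _ => h1 i), Finset.sum_add_distrib,
            Finset.sum_ite_eq' Finset.univ t₁ (fun _ => W • s t₁), if_pos (Finset.mem_univ t₁),
            hval₂, ← hαv, hα_def]
          abel
      · -- W is large: use only the off-line elements, with exact total weight W
        set x : Fin (p+1) → ZMod p := fun t => ratioZ v (s t - s t₁) with hx_def
        have hxcross : ∀ t ∈ Q, crossL v (s t - s t₁) = 0 := by
          intro t ht
          rw [map_sub, hyt t ht, hyt t₁ ht₁, sub_self]
        have hx : ∀ t ∈ Q, s t = s t₁ + x t • v := by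
          intro t ht
          have := ratioZ_spec hp v _ hv (hxcross t ht)
          rw [hx_def]
          rw [sub_eq_iff_eq_add] at this
          rw [this, add_comm]
        have hxinj : Set.InjOn x Q := by
          intro a ha b hb hab
          apply hinj
          rw [hx a ha, hx b hb, hab]
        have hxcard : (Q.image x).card = Q.card := Finset.card_image_of_injOn hxinj
        have hWq : p ≤ W * ((Q.image x).card - 1) + 1 := by
          rw [hxcard]
          rcases Nat.lt_or_ge P.card (p-1) with hPlt | hPge
          · -- P.card ≤ p - 2, so Q.card - 1 ≥ 2 and 2 * W ≥ p
            have he : (p-2)/P.card ≤ (p-2)/2 := Nat.div_le_div_left hm2 (by omega)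
            have h2W : p ≤ 2 * W := by omega
            have : W * 2 ≤ W * (Q.card - 1) := Nat.mul_le_mul le_rfl (by omega)
            omega
          · -- P.card = p - 1, Q.card = 2, W = p - 1
            have hPeq : P.card = p - 1 := by omega
            have he : (p-2)/P.card = 0 := Nat.div_eq_of_lt (by omega)
            have hQ1 : Q.card - 1 = 1 := by omega
            rw [hQ1, Nat.mul_one]
            omega
        have hmem : ratioZ v α ∈ itS (Q.image x) W :=
          mem_itS_univ hp _ (Finset.image_nonempty.2 hQne) W hWq _
        obtain ⟨d₃, hsupp₃, hsum₃, hval₃⟩ := real_exact Q x W (ratioZ v α) hmem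
        refine ⟨d₃, by omega, ?_⟩
        have hsumQ : ∑ i ∈ Q, d₃ i = W := by
          rw [Finset.sum_subset (Finset.subset_univ Q) (fun i _ hi => hsupp₃ i hi), hsum₃]
        have hvalQ : ∑ i ∈ Q, (d₃ i : ZMod p) * x i = ratioZ v α := by
          rw [Finset.sum_subset (Finset.subset_univ Q)
            (fun i _ hi => by rw [hsupp₃ i hi, Nat.cast_zero, zero_mul]), hval₃]
        calc ∑ i, d₃ i • s i = ∑ i ∈ Q, d₃ i • s i :=
              (Finset.sum_subset (Finset.subset_univ Q)
                (fun i _ hi => by rw [hsupp₃ i hi, zero_smul])).symm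
          _ = ∑ i ∈ Q, (d₃ i • s t₁ + ((d₃ i : ZMod p) * x i) • v) := by
              refine Finset.sum_congr rfl fun i hi => ?_
              rw [hx i hi, smul_add, hcast (d₃ i) (x i • v), smul_smul]
          _ = (∑ i ∈ Q, d₃ i) • s t₁ + (∑ i ∈ Q, (d₃ i : ZMod p) * x i) • v := by
              rw [Finset.sum_add_distrib, Finset.sum_smul, Finset.sum_smul]
          _ = g := by
              rw [hsumQ, hvalQ, ← hαv, hα_def]
              abel
end

section
/- Let p be an odd prime and n a positive integer. Let a₁, …, aₙ be integers each prime to p (i.e. not divisible by p) with a₁ + ⋯ + aₙ ≢ 1 (mod p). Then for any integers b₁, …, bₙ there exist non-negative integers d₁, …, d_{n+1} with d₁ + ⋯ + d_{n+1} ≤ n(p−1)/2 such that d_k + d_{n+1}·a_k ≡ b_k (mod p) for every k ∈ {1, …, n}. -/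
/-- Sum of `(m + i) / n` for `i < n` equals `m`. -/
lemma aux_sum_div (n : ℕ) (hn : 0 < n) (m : ℕ) :
    ∑ i ∈ Finset.range n, (m + i) / n = m := by
  obtain ⟨q, r, hr, rfl⟩ : ∃ q r, r < n ∧ m = n * q + r :=
    ⟨m / n, m % n, Nat.mod_lt _ hn, (Nat.div_add_mod m n).symm⟩
  have h1 : ∀ i, (n * q + r + i) / n = q + (r + i) / n := by
    intro i; rw [add_assoc, Nat.mul_add_div hn]
  simp_rw [h1]
  rw [Finset.sum_add_distrib, Finset.sum_const, Finset.card_range, smul_eq_mul]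
  have h2 : ∀ i ∈ Finset.range n, (r + i) / n = if n ≤ r + i then 1 else 0 := by
    intro i hi
    rw [Finset.mem_range] at hi
    split
    · next h =>
      rw [Nat.div_eq_sub_div hn h, Nat.div_eq_of_lt (by omega)]
    · next h => exact Nat.div_eq_of_lt (by omega)
  rw [Finset.sum_congr rfl h2, Finset.sum_ite, Finset.sum_const, Finset.sum_const,
    smul_eq_mul, smul_eq_mul, mul_one, mul_zero, add_zero]
  have h3 : Finset.filter (fun i => n ≤ r + i) (Finset.range n) = Finset.Ico (n - r) n := by
    ext i
    simp only [Finset.mem_filter, Finset.mem_range, Finset.mem_Ico]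
    omega
  rw [h3, Nat.card_Ico]
  omega

/-- Reindex a sum over `ZMod p` (via `val`) as a sum over `range p`. -/
lemma aux_zmod_sum {p : ℕ} [NeZero p] (g : ℕ → ℕ) :
    ∑ x : ZMod p, g x.val = ∑ j ∈ Finset.range p, g j := by
  symm
  refine Finset.sum_bij (fun j _ => ((j : ZMod p))) (fun j hj => Finset.mem_univ _)
    ?_ ?_ ?_
  · intro j hj j' hj' h
    rw [Finset.mem_range] at hj hj'
    have := congrArg ZMod.val h
    rwa [ZMod.val_cast_of_lt hj, ZMod.val_cast_of_lt hj'] at this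
  · intro x _
    exact ⟨x.val, Finset.mem_range.2 x.val_lt, ZMod.natCast_rightInverse x⟩
  · intro j hj
    rw [Finset.mem_range] at hj
    rw [ZMod.val_cast_of_lt hj]

/-- Key counting lemma: if the residues of `F e` mod `p` are pairwise distinct as `e`
ranges over `ZMod p`, and `∑ F e = p * Q + ∑ x, x.val`, then some `F e ≤ Q`. -/
lemma aux_key (p Q : ℕ) [NeZero p] (F : ZMod p → ℕ)
    (hinj : Function.Injective fun e => ((F e : ZMod p)))
    (hs : ∑ e : ZMod p, F e = p * Q + ∑ x : ZMod p, x.val) :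
    ∃ e, F e ≤ Q := by
  by_contra hcon
  push_neg at hcon
  have hp : 0 < p := NeZero.pos p
  set r : ZMod p → ℕ := fun e => ((F e : ZMod p)).val with hr_def
  set q : ZMod p → ℕ := fun e => F e / p with hq_def
  have hrp : ∀ e, r e < p := fun e => ZMod.val_lt _
  have hdecomp : ∀ e, F e = p * q e + r e := by
    intro e
    simp only [hr_def, hq_def, ZMod.val_natCast]
    exact (Nat.div_add_mod (F e) p).symm
  have hbij : Function.Bijective fun e => ((F e : ZMod p)) :=
    Finite.injective_iff_bijective.1 hinj
  have hr : ∑ e : ZMod p, r e = ∑ x : ZMod p, x.val :=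
    Fintype.sum_bijective _ hbij _ _ (fun e => rfl)
  have hq : ∑ e : ZMod p, q e = Q := by
    apply Nat.eq_of_mul_eq_mul_left hp
    have h1 : ∑ e : ZMod p, F e = p * (∑ e : ZMod p, q e) + ∑ e : ZMod p, r e := by
      rw [Finset.mul_sum, ← Finset.sum_add_distrib]
      exact Finset.sum_congr rfl fun e _ => hdecomp e
    omega
  have hlow : ∀ e, (Q + p - r e) / p ≤ q e := by
    intro e
    have h2 : Q + 1 ≤ p * q e + r e := by rw [← hdecomp]; exact hcon e
    calc (Q + p - r e) / p ≤ (p * q e + (p - 1)) / p :=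
          Nat.div_le_div_right (by have := hrp e; omega)
      _ = q e := by rw [Nat.mul_add_div hp, Nat.div_eq_of_lt (by omega), add_zero]
  have hub : ∑ e : ZMod p, (Q + p - r e) / p ≤ Q := by
    have h := Finset.sum_le_sum (s := Finset.univ) (fun e _ => hlow e)
    rwa [hq] at h
  have hL : ∑ e : ZMod p, (Q + p - r e) / p = Q + 1 := by
    have h4 : ∑ e : ZMod p, (Q + p - r e) / p = ∑ x : ZMod p, (Q + p - x.val) / p :=
      Fintype.sum_bijective _ hbij _ _ (fun e => rfl)
    rw [h4, aux_zmod_sum (fun j => (Q + p - j) / p), ← Finset.sum_range_reflect]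
    have h5 : ∀ j ∈ Finset.range p, (Q + p - (p - 1 - j)) / p = (Q + 1 + j) / p := by
      intro j hj
      rw [Finset.mem_range] at hj
      congr 1
      omega
    rw [Finset.sum_congr rfl h5, aux_sum_div p hp (Q + 1)]
  omega

/-- Let `p` be an odd prime and `n` a positive integer. Let `a 1, …, a n` be integers
prime to `p` with `a 1 + ⋯ + a n ≢ 1 (mod p)`. Then for any integers `b 1, …, b n` there
are non-negative integers `d 1, …, d n, e` with `d 1 + ⋯ + d n + e ≤ n(p-1)/2` such that
`d k + e * a k ≡ b k (mod p)` for every `k`. -/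
theorem stmt1 (p n : ℕ) (hp : p.Prime) (hodd : Odd p) (hn : 0 < n)
    (a : Fin n → ℤ) (ha : ∀ k, ¬ ((p : ℤ) ∣ a k))
    (hsum : ¬ ((∑ k, a k) ≡ 1 [ZMOD (p : ℤ)]))
    (b : Fin n → ℤ) :
    ∃ (d : Fin n → ℕ) (e : ℕ),
      (∑ k, d k) + e ≤ n * (p - 1) / 2 ∧
      ∀ k, ((d k : ℤ) + (e : ℤ) * a k) ≡ b k [ZMOD (p : ℤ)] := by
  haveI : Fact p.Prime := ⟨hp⟩
  have hp0 : 0 < p := hp.pos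
  obtain ⟨t, ht⟩ : ∃ t, p - 1 = 2 * t := by
    obtain ⟨m, hm⟩ := hodd
    exact ⟨m, by omega⟩
  set A : Fin n → ZMod p := fun k => ((a k : ZMod p)) with hA_def
  set B : Fin n → ZMod p := fun k => ((b k : ZMod p)) with hB_def
  have hA : ∀ k, A k ≠ 0 := by
    intro k h
    exact ha k ((ZMod.intCast_zmod_eq_zero_iff_dvd _ _).1 h)
  have hS : (∑ k, A k) - 1 ≠ 0 := by
    intro h
    apply hsum
    rw [← ZMod.intCast_eq_intCast_iff]
    push_cast
    rw [sub_eq_zero] at h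
    simpa [hA_def] using h
  set F : ZMod p → ℕ := fun e => (∑ k, (B k - e * A k).val) + e.val with hF_def
  -- the residues of `F e` mod p
  have hcast : ∀ e : ZMod p, ((F e : ZMod p))
      = (∑ k, B k) - e * ((∑ k, A k) - 1) := by
    intro e
    simp only [hF_def]
    push_cast
    simp only [ZMod.natCast_val, ZMod.cast_id]
    rw [Finset.sum_sub_distrib, ← Finset.mul_sum]
    ring
  have hinj : Function.Injective fun e => ((F e : ZMod p)) := by
    intro e1 e2 h
    simp only [hcast] at h
    exact mul_right_cancel₀ hS (sub_right_injective h)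
  -- total sum of F over all e
  have hval_sum : ∑ x : ZMod p, x.val = p * t := by
    rw [aux_zmod_sum (fun j => j), Finset.sum_range_id, ht,
      (by ring : p * (2 * t) = p * t * 2), Nat.mul_div_cancel _ two_pos]
  have hshift : ∀ k : Fin n, ∑ e : ZMod p, (B k - e * A k).val
      = ∑ x : ZMod p, x.val := by
    intro k
    have hbij : Function.Bijective (fun e : ZMod p => B k - e * A k) := by
      apply Finite.injective_iff_bijective.1
      intro e1 e2 h
      have h2 : e1 * A k = e2 * A k := by
        have := sub_right_injective h
        exact this
      exact mul_right_cancel₀ (hA k) h2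
    exact Fintype.sum_bijective _ hbij _ _ (fun e => rfl)
  have htot : ∑ e : ZMod p, F e = p * (n * t) + ∑ x : ZMod p, x.val := by
    simp only [hF_def]
    rw [Finset.sum_add_distrib, Finset.sum_comm]
    simp_rw [hshift]
    rw [Finset.sum_const, Finset.card_univ, Fintype.card_fin, smul_eq_mul, hval_sum]
    ring
  obtain ⟨e, he⟩ := aux_key p (n * t) F hinj htot
  refine ⟨fun k => (B k - e * A k).val, e.val, ?_, ?_⟩
  · calc (∑ k, (B k - e * A k).val) + e.val = F e := rfl
      _ ≤ n * t := he
      _ = n * (2 * t) / 2 := by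
          rw [(by ring : n * (2 * t) = n * t * 2), Nat.mul_div_cancel _ two_pos]
      _ = n * (p - 1) / 2 := by rw [ht]
  · intro k
    rw [← ZMod.intCast_eq_intCast_iff]
    push_cast
    simp only [ZMod.natCast_val, ZMod.cast_id]
    ring
end

section
/- Let p be an odd prime and let G be the additive group (ℤ/pℤ) × (ℤ/pℤ). Let s₁, s₂, s₃ ∈ G be pairwise linearly independent (no one of them is a ℤ/pℤ-multiple of another), and suppose s₃ = a·s₁ + b·s₂ for integers a, b with a + b ≢ 1 (mod p). Then for every nonzero element g of G there exist non-negative integers d₁, d₂, d₃ with d₁ + d₂ + d₃ ≤ p − 1 such that g = d₁·s₁ + d₂·s₂ + d₃·s₃. -/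
private lemma sum_val_zmod' (p : ℕ) [NeZero p] :
    (∑ t : ZMod p, t.val) * 2 = p * (p - 1) := by
  have h0 : ∑ t : ZMod p, t.val = ∑ i : Fin p, i.val := by
    cases p with
    | zero => exact absurd rfl (NeZero.ne 0)
    | succ n => rfl
  rw [h0, Fin.sum_univ_eq_sum_range (fun i => i) p, Finset.sum_range_id_mul_two]

private lemma core_zmod (p : ℕ) [hp : Fact p.Prime] (α β x y : ZMod p)
    (hα : α ≠ 0) (hβ : β ≠ 0) (hαβ : α + β ≠ 1) :
    ∃ t : ZMod p, (x - t * α).val + (y - t * β).val + t.val ≤ p - 1 := by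
  by_contra h
  push_neg at h
  set F : ZMod p → ℕ := fun t => (x - t * α).val + (y - t * β).val + t.val with hF
  set R : ZMod p → ℕ := fun t => (x + y + t * (1 - α - β)).val with hR
  have hp1 : 0 < p := hp.out.pos
  have key : ∀ t, R t + p ≤ F t := by
    intro t
    have hmod : F t % p = R t := by
      have h1 : ((F t : ℕ) : ZMod p) = x + y + t * (1 - α - β) := by
        simp only [hF]
        push_cast [ZMod.natCast_val, ZMod.cast_id]
        ring
      have h2 := congrArg ZMod.val h1
      rwa [ZMod.val_natCast] at h2
    have hFp : p ≤ F t := by simp only [hF]; have := h t; omega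
    have hdm := Nat.div_add_mod (F t) p
    have hd : 1 ≤ F t / p := (Nat.one_le_div_iff hp1).mpr hFp
    nlinarith [hdm, hd, hmod]
  have hS1 : ∑ t : ZMod p, (x - t * α).val = ∑ t : ZMod p, t.val := by
    apply Fintype.sum_bijective (fun t : ZMod p => x - t * α) _ _ _ (fun t => rfl)
    apply Finite.injective_iff_bijective.mp
    intro t t' htt
    exact mul_right_cancel₀ hα (sub_right_injective htt)
  have hS2 : ∑ t : ZMod p, (y - t * β).val = ∑ t : ZMod p, t.val := by
    apply Fintype.sum_bijective (fun t : ZMod p => y - t * β) _ _ _ (fun t => rfl)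
    apply Finite.injective_iff_bijective.mp
    intro t t' htt
    exact mul_right_cancel₀ hβ (sub_right_injective htt)
  have hSR : ∑ t : ZMod p, R t = ∑ t : ZMod p, t.val := by
    apply Fintype.sum_bijective (fun t : ZMod p => x + y + t * (1 - α - β)) _ _ _ (fun t => rfl)
    apply Finite.injective_iff_bijective.mp
    intro t t' htt
    have h1 : (1 : ZMod p) - α - β ≠ 0 := by
      intro hz
      apply hαβ
      have : (1 : ZMod p) = α + β := by linear_combination hz
      exact this.symm
    exact mul_right_cancel₀ h1 (add_left_cancel htt)
  have hsum : ∑ t : ZMod p, F t = 3 * ∑ t : ZMod p, t.val := by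
    simp only [hF, Finset.sum_add_distrib, hS1, hS2]
    ring
  have hsum2 : ∑ t : ZMod p, (R t + p) ≤ ∑ t : ZMod p, F t :=
    Finset.sum_le_sum fun t _ => key t
  rw [Finset.sum_add_distrib, hSR, Finset.sum_const, Finset.card_univ, ZMod.card,
    smul_eq_mul] at hsum2
  rw [hsum] at hsum2
  have h2S := sum_val_zmod' p
  have hlt : p * (p - 1) < p * p := (Nat.mul_lt_mul_left hp1).mpr (Nat.sub_lt hp1 one_pos)
  linarith

/-- Let `p` be an odd prime and `G = (ℤ/pℤ) × (ℤ/pℤ)`. Let `s₁, s₂, s₃ ∈ G` be pairwise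
linearly independent (no one of them is a `ℤ/pℤ`-multiple of another), with
`s₃ = a • s₁ + b • s₂` where `a + b ≢ 1 (mod p)`. Then every nonzero `g ∈ G` is
`d₁ • s₁ + d₂ • s₂ + d₃ • s₃` with non-negative integers `dᵢ` summing to at most `p - 1`. -/
theorem stmt2 (p : ℕ) (hp : p.Prime) (hodd : Odd p)
    (s₁ s₂ s₃ : ZMod p × ZMod p)
    (h12 : ∀ c : ZMod p, s₂ ≠ c • s₁) (h21 : ∀ c : ZMod p, s₁ ≠ c • s₂)
    (h13 : ∀ c : ZMod p, s₃ ≠ c • s₁) (h31 : ∀ c : ZMod p, s₁ ≠ c • s₃)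
    (h23 : ∀ c : ZMod p, s₃ ≠ c • s₂) (h32 : ∀ c : ZMod p, s₂ ≠ c • s₃)
    (a b : ℤ) (hs₃ : s₃ = a • s₁ + b • s₂)
    (hab : ¬ (a + b ≡ 1 [ZMOD (p : ℤ)]))
    (g : ZMod p × ZMod p) (hg : g ≠ 0) :
    ∃ d₁ d₂ d₃ : ℕ,
      d₁ + d₂ + d₃ ≤ p - 1 ∧ g = d₁ • s₁ + d₂ • s₂ + d₃ • s₃ := by
  haveI : Fact p.Prime := ⟨hp⟩
  set α : ZMod p := (a : ZMod p) with hαdef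
  set β : ZMod p := (b : ZMod p) with hβdef
  have hs₃' : s₃ = α • s₁ + β • s₂ := by
    rw [hs₃, Int.cast_smul_eq_zsmul, Int.cast_smul_eq_zsmul]
  have hβ0 : β ≠ 0 := by
    intro hz
    exact h13 α (by rw [hs₃', hz, zero_smul, add_zero])
  have hα0 : α ≠ 0 := by
    intro hz
    exact h23 β (by rw [hs₃', hz, zero_smul, zero_add])
  have hαβ : α + β ≠ 1 := by
    intro hz
    apply hab
    rw [← ZMod.intCast_eq_intCast_iff]
    push_cast
    exact hz
  -- s₁, s₂ form a basis
  have hli : LinearIndependent (ZMod p) ![s₁, s₂] := by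
    rw [linearIndependent_fin2]
    refine ⟨by simpa using h12 0, fun c => by simpa using (h21 c).symm⟩
  have hcard : Fintype.card (Fin 2) = Module.finrank (ZMod p) (ZMod p × ZMod p) := by simp
  obtain ⟨x, y, hg'⟩ : ∃ x y : ZMod p, g = x • s₁ + y • s₂ := by
    let B := basisOfLinearIndependentOfCardEqFinrank hli hcard
    have hgsum := B.sum_repr g
    rw [Fin.sum_univ_two] at hgsum
    have hB : ∀ i, B i = ![s₁, s₂] i := fun i =>
      congrFun (coe_basisOfLinearIndependentOfCardEqFinrank hli hcard) i
    rw [hB 0, hB 1] at hgsum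
    simp only [Matrix.cons_val_zero, Matrix.cons_val_one, Matrix.head_cons] at hgsum
    exact ⟨B.repr g 0, B.repr g 1, hgsum.symm⟩
  obtain ⟨t, ht⟩ := core_zmod p α β x y hα0 hβ0 hαβ
  refine ⟨(x - t * α).val, (y - t * β).val, t.val, ht, ?_⟩
  rw [← Nat.cast_smul_eq_nsmul (ZMod p), ← Nat.cast_smul_eq_nsmul (ZMod p),
    ← Nat.cast_smul_eq_nsmul (ZMod p), ZMod.natCast_rightInverse,
    ZMod.natCast_rightInverse, ZMod.natCast_rightInverse, hg', hs₃']
  simp only [smul_add, smul_smul]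
  module
end

section
/- Let p be an odd prime and let G be the additive group (ℤ/pℤ) × (ℤ/pℤ). Let s₁, s₂, s₃, s₄ be pairwise distinct nonzero elements of G such that s₂ lies in the cyclic subgroup generated by s₁, s₄ lies in the cyclic subgroup generated by s₃, and the subgroups generated by s₁ and by s₃ intersect only in the zero element. Then for every nonzero element g of G there exist non-negative integers d₁, d₂, d₃, d₄ with d₁ + d₂ + d₃ + d₄ ≤ p − 1 such that g = d₁·s₁ + d₂·s₂ + d₃·s₃ + d₄·s₄. -/
lemma keylem3 {p m : ℕ} (hpm : p = 2 * m + 1) (k : ZMod p) (hk0 : k ≠ 0) (hk1 : k ≠ 1)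
    (a : ZMod p) : ∃ d₁ d₂ : ℕ, d₁ + d₂ ≤ m ∧ a = (d₁ : ZMod p) + (d₂ : ZMod p) * k := by
  haveI : NeZero p := ⟨by omega⟩
  have hkt : ((k.val : ℕ) : ZMod p) = k := ZMod.natCast_rightInverse k
  have hav : ((a.val : ℕ) : ZMod p) = a := ZMod.natCast_rightInverse a
  set t := k.val with htdef
  have htlt : t < p := ZMod.val_lt k
  have ht0 : t ≠ 0 := by
    intro h; apply hk0; rw [← hkt, h]; simp
  have ht1 : t ≠ 1 := by
    intro h; apply hk1; rw [← hkt, h]; simp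
  have havlt : a.val < p := ZMod.val_lt a
  by_cases hcase : t ≤ m
  · -- forward: d₂ = a.val / t, d₁ = a.val % t
    obtain ⟨q, r, hd, hr⟩ : ∃ q r, t * q + r = a.val ∧ r < t :=
      ⟨a.val / t, a.val % t, Nat.div_add_mod _ _, Nat.mod_lt _ (by omega)⟩
    refine ⟨r, q, ?_, ?_⟩
    · by_contra hcon
      push_neg at hcon
      have hq1 : 1 ≤ q := by
        by_contra h
        push_neg at h
        interval_cases q <;> omega
      have h2t' : (2:ℤ) ≤ t := by exact_mod_cast (by omega : 2 ≤ t)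
      have hq1' : (1:ℤ) ≤ q := by exact_mod_cast hq1
      have hd' : (t:ℤ) * q + r = a.val := by exact_mod_cast hd
      have hcon' : (m:ℤ) + 1 ≤ r + q := by exact_mod_cast hcon
      have hav' : (a.val:ℤ) ≤ 2*m := by exact_mod_cast (by omega : a.val ≤ 2*m)
      have htm' : (t:ℤ) ≤ m := by exact_mod_cast hcase
      nlinarith [mul_nonneg (by linarith : (0:ℤ) ≤ (t:ℤ) - 2) (by linarith : (0:ℤ) ≤ (q:ℤ) - 1)]
    · rw [← hav, ← hkt, ← hd]
      push_cast
      ring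
  · -- backward
    push_neg at hcase
    by_cases ha : a.val ≤ m
    · exact ⟨a.val, 0, by omega, by rw [← hav]; simp⟩
    · push_neg at ha
      obtain ⟨u, hu⟩ : ∃ u, t + u = p := ⟨p - t, by omega⟩
      have hu1 : 1 ≤ u := by omega
      have hum : u ≤ m := by omega
      obtain ⟨b, hb⟩ : ∃ b, a.val + b = p := ⟨p - a.val, by omega⟩
      have hb1 : 1 ≤ b := by omega
      have hbm : b ≤ m := by omega
      obtain ⟨q, r, hd0, hr⟩ : ∃ q r, u * q + r = b - 1 ∧ r < u :=
        ⟨(b-1) / u, (b-1) % u, Nat.div_add_mod _ _, Nat.mod_lt _ (by omega)⟩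
      have hd : u * q + r + 1 = b := by rw [hd0]; omega
      obtain ⟨d₁, hd₁⟩ : ∃ d₁, r + 1 + d₁ = u := ⟨u - r - 1, by omega⟩
      refine ⟨d₁, q + 1, ?_, ?_⟩
      · rcases Nat.eq_zero_or_pos q with hq0 | hq1
        · subst hq0
          simp at hd
          omega
        · obtain ⟨c, rfl⟩ : ∃ c, q = 1 + c := ⟨q - 1, by omega⟩
          have hc : c ≤ u * c := Nat.le_mul_of_pos_left c (by omega)
          have hexp : u * (1 + c) = u + u * c := by ring
          rw [hexp] at hd
          linarith
      · have key : (q + 1) * u = b + d₁ := by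
          have h2 : (q + 1) * u = u * q + u := by ring
          rw [h2]
          linarith
        have hku : k + (u : ZMod p) = 0 := by
          rw [← hkt, ← Nat.cast_add, hu]
          exact ZMod.natCast_self p
        have hab : a + (b : ZMod p) = 0 := by
          rw [← hav, ← Nat.cast_add, hb]
          exact ZMod.natCast_self p
        have keyC : ((q + 1 : ℕ) : ZMod p) * (u : ZMod p) = (b : ZMod p) + (d₁ : ZMod p) := by
          exact_mod_cast congrArg (Nat.cast : ℕ → ZMod p) key
        have hkeq : k = -(u : ZMod p) := by linear_combination hku
        have haeq : a = -(b : ZMod p) := by linear_combination hab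
        rw [haeq, hkeq]
        push_cast at keyC ⊢
        linear_combination keyC
/-- Let `p` be an odd prime and `G = (ℤ/pℤ) × (ℤ/pℤ)`. Let `s₁, s₂, s₃, s₄` be pairwise
distinct nonzero elements of `G` with `s₂ ∈ ⟨s₁⟩`, `s₄ ∈ ⟨s₃⟩` and `⟨s₁⟩ ∩ ⟨s₃⟩ = {0}`.
Then every nonzero `g ∈ G` is `d₁ • s₁ + d₂ • s₂ + d₃ • s₃ + d₄ • s₄` with non-negative
integers `dᵢ` summing to at most `p - 1`. -/
theorem stmt3 (p : ℕ) (hp : p.Prime) (hodd : Odd p)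
    (s₁ s₂ s₃ s₄ : ZMod p × ZMod p)
    (hdist : [s₁, s₂, s₃, s₄].Pairwise (· ≠ ·))
    (hnz₁ : s₁ ≠ 0) (hnz₂ : s₂ ≠ 0) (hnz₃ : s₃ ≠ 0) (hnz₄ : s₄ ≠ 0)
    (hs₂ : s₂ ∈ AddSubgroup.zmultiples s₁)
    (hs₄ : s₄ ∈ AddSubgroup.zmultiples s₃)
    (hinter : AddSubgroup.zmultiples s₁ ⊓ AddSubgroup.zmultiples s₃ = ⊥)
    (g : ZMod p × ZMod p) (hg : g ≠ 0) :
    ∃ d₁ d₂ d₃ d₄ : ℕ,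
      d₁ + d₂ + d₃ + d₄ ≤ p - 1 ∧
      g = d₁ • s₁ + d₂ • s₂ + d₃ • s₃ + d₄ • s₄ := by
  obtain ⟨m, hpm⟩ := hodd
  haveI : NeZero p := ⟨by omega⟩
  haveI : Fact p.Prime := ⟨hp⟩
  simp only [List.pairwise_cons, List.mem_cons, List.mem_singleton, List.not_mem_nil] at hdist
  have h12 : s₁ ≠ s₂ := by tauto
  have h34 : s₃ ≠ s₄ := by tauto
  -- scalars
  obtain ⟨z, hz⟩ := AddSubgroup.mem_zmultiples_iff.mp hs₂
  obtain ⟨w, hw⟩ := AddSubgroup.mem_zmultiples_iff.mp hs₄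
  set κ : ZMod p := (z : ZMod p) with hκdef
  set μ : ZMod p := (w : ZMod p) with hμdef
  have hκ : κ • s₁ = s₂ := by rw [hκdef, Int.cast_smul_eq_zsmul]; exact hz
  have hμ : μ • s₃ = s₄ := by rw [hμdef, Int.cast_smul_eq_zsmul]; exact hw
  have hκ0 : κ ≠ 0 := by intro h; apply hnz₂; rw [← hκ, h, zero_smul]
  have hκ1 : κ ≠ 1 := by intro h; apply h12; rw [← hκ, h, one_smul]
  have hμ0 : μ ≠ 0 := by intro h; apply hnz₄; rw [← hμ, h, zero_smul]
  have hμ1 : μ ≠ 1 := by intro h; apply h34; rw [← hμ, h, one_smul]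
  -- surjectivity of (x, y) ↦ x • s₁ + y • s₃
  have hmem : ∀ (c : ZMod p) (s : ZMod p × ZMod p), c • s ∈ AddSubgroup.zmultiples s := by
    intro c s
    refine AddSubgroup.mem_zmultiples_iff.mpr ⟨(c.val : ℤ), ?_⟩
    rw [← Int.cast_smul_eq_zsmul (ZMod p)]
    push_cast
    rw [ZMod.natCast_rightInverse c]
  have hsurj : Function.Surjective (fun c : ZMod p × ZMod p => c.1 • s₁ + c.2 • s₃) := by
    rw [← Finite.injective_iff_surjective]
    rintro ⟨x, y⟩ ⟨x', y'⟩ hxy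
    simp only at hxy
    have heq : (x - x') • s₁ = (y' - y) • s₃ := by
      rw [sub_smul, sub_smul, sub_eq_sub_iff_add_eq_add]
      rw [hxy]; abel
    have h0 : (x - x') • s₁ = 0 := by
      have hm : (x - x') • s₁ ∈ AddSubgroup.zmultiples s₁ ⊓ AddSubgroup.zmultiples s₃ :=
        ⟨hmem _ _, heq ▸ hmem _ _⟩
      rw [hinter] at hm
      exact hm
    have h0' : (y' - y) • s₃ = 0 := heq ▸ h0
    have hx : x = x' := by
      rcases smul_eq_zero.mp h0 with h | h
      · exact sub_eq_zero.mp h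
      · exact absurd h hnz₁
    have hy : y = y' := by
      rcases smul_eq_zero.mp h0' with h | h
      · exact (sub_eq_zero.mp h).symm
      · exact absurd h hnz₃
    exact Prod.ext hx hy
  obtain ⟨⟨x, y⟩, hg'⟩ := hsurj g
  simp only at hg'
  obtain ⟨d₁, d₂, hd12, hx⟩ := keylem3 hpm κ hκ0 hκ1 x
  obtain ⟨d₃, d₄, hd34, hy⟩ := keylem3 hpm μ hμ0 hμ1 y
  refine ⟨d₁, d₂, d₃, d₄, by omega, ?_⟩
  rw [← hg', ← hκ, ← hμ, hx, hy]
  simp only [← Nat.cast_smul_eq_nsmul (ZMod p)]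
  module
end
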